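/- Let 2 ≤ n ≤ r, let s = gcd(n, r), and write n = x·s, r = y·s with gcd(x,y) = 1. Assume both x and y are odd. For i = 1, …, s define the vectors v_i ∈ ℚʳ by v_i = Σ_{ℓ=0}^{y−1} (−1)^ℓ e_{i+ℓs}, where e_1, …, e_r is the standard basis of ℚʳ. Then v_1, …, v_s form a basis of the eigenspace {v ∈ ℚʳ : S_rⁿ·v = −v} of S_rⁿ for the eigenvalue −1. -/

import Mathlib

/-!
Extend `w : Fin r → R` to the sequence `W : ℕ → R` with `W (t + r) = -W t`. Then `S_rᵏ w` is
the window of `W` shifted by `k`, so `S_rⁿ w = -w` exactly when `W` is also `n`-antiperiodic.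
Writing `k x = q y + 1` (Bezout), parity forces `k + q` odd, so with `n = x s`, `r = y s` and
`x, y` odd, `W` is `n`- and `r`-antiperiodic iff it is `s`-antiperiodic. An `s`-antiperiodic
sequence is determined by its first `s` values, and `v_i` is the one that starts with the `i`-th
unit vector.
-/

open Matrix Function

variable {R : Type*} [CommRing R]

theorem Function.Antiperiodic.add_mul_eq {f : ℕ → R} {c : ℕ} (h : Antiperiodic f c)
    (x k : ℕ) : f (x + k * c) = (-1) ^ k * f x := by
  simpa [smul_eq_mul] using h.add_nsmul_eq (x := x) k

theorem Function.Antiperiodic.odd_mul {β : Type*} [InvolutiveNeg β] {f : ℕ → β} {c k : ℕ}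
    (h : Antiperiodic f c) (hk : Odd k) : Antiperiodic f (k * c) := by
  obtain ⟨m, rfl⟩ := hk
  simpa using h.odd_nsmul_antiperiodic m

theorem Function.Antiperiodic.of_coprime {f : ℕ → R} {x y s : ℕ} (hxy : x.Coprime y)
    (hx : Odd x) (hy : Odd y) (hfx : Antiperiodic f (x * s)) (hfy : Antiperiodic f (y * s)) :
    Antiperiodic f s := by
  obtain rfl | hy1 := eq_or_ne y 1
  · simpa using hfy
  obtain ⟨k, -, hk⟩ := Nat.exists_mul_mod_eq_one_of_coprime hxy (by have := hy.pos; omega)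
  obtain ⟨q, hkq⟩ : ∃ q, x * k = q * y + 1 :=
    ⟨x * k / y, by rw [← hk]; exact (Nat.div_add_mod' _ _).symm⟩
  have hodd : Odd (q + k) := by
    have hpar := congrArg Odd hkq
    simp only [hx, Nat.odd_mul, true_and, Nat.odd_add, hy, and_true, Nat.not_even_one, iff_false,
      Nat.not_odd_iff_even, eq_iff_iff] at hpar
    exact Nat.odd_add'.2 hpar
  have hshift : s + q * (y * s) = k * (x * s) := by
    rw [show k * (x * s) = x * k * s by ring, hkq]; ring
  intro t
  have h := hfy.add_mul_eq (t + s) q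
  rw [add_assoc, hshift, hfx.add_mul_eq] at h
  calc f (t + s) = (-1) ^ q * ((-1) ^ q * f (t + s)) := by
        rw [← mul_assoc, ← pow_add, Even.neg_one_pow ⟨q, rfl⟩, one_mul]
    _ = -f t := by rw [← h, ← mul_assoc, ← pow_add, hodd.neg_one_pow, neg_one_mul]

def antiperiodicSingle (s i m : ℕ) : R := if m % s = i then (-1) ^ (m / s) else 0

theorem antiperiodicSingle_antiperiodic {s : ℕ} (hs : 0 < s) (i : ℕ) :
    Antiperiodic (antiperiodicSingle (R := R) s i) s := by
  intro m
  simp only [antiperiodicSingle, Nat.add_mod_right, Nat.add_div_right m hs, pow_succ]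
  split_ifs <;> simp

theorem antiperiodicSingle_of_lt {s i m : ℕ} (hm : m < s) :
    antiperiodicSingle (R := R) s i m = if m = i then 1 else 0 := by
  simp [antiperiodicSingle, Nat.mod_eq_of_lt hm, Nat.div_eq_of_lt hm]

theorem linearIndependent_antiperiodicSingle (s : ℕ) :
    LinearIndependent R (fun i : Fin s => antiperiodicSingle (R := R) s i) := by
  apply LinearIndependent.of_comp (LinearMap.funLeft R R (Fin.val : Fin s → ℕ))
  convert (Pi.basisFun R (Fin s)).linearIndependent
  ext i j
  simp [antiperiodicSingle_of_lt j.isLt, Pi.single_apply, Fin.val_inj]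

theorem Function.Antiperiodic.eq_sum_antiperiodicSingle {f : ℕ → R} {s : ℕ}
    (hf : Antiperiodic f s) (hs : 0 < s) : f = ∑ i : Fin s, f i • antiperiodicSingle s i := by
  ext m
  rw [Finset.sum_apply, Finset.sum_eq_single ⟨m % s, Nat.mod_lt m hs⟩]
  · conv_lhs => rw [← Nat.mod_add_div' m s, hf.add_mul_eq]
    simp [antiperiodicSingle, mul_comm]
  · intro j _ hj
    have : m % s ≠ j := fun h => hj (Fin.ext h.symm)
    simp [antiperiodicSingle, this]
  · simp

theorem antiperiodicSingle_eq_sum_range {s y i t : ℕ} (hi : i < s) (ht : t < y * s) :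
    antiperiodicSingle s i t =
      ∑ ℓ ∈ Finset.range y, (-1 : R) ^ ℓ * (if t = i + ℓ * s then 1 else 0) := by
  have hs : 0 < s := by omega
  have hdecomp : ∀ ℓ, t = i + ℓ * s ↔ t % s = i ∧ t / s = ℓ := fun ℓ => by
    constructor
    · rintro rfl
      simp [Nat.add_mul_div_right _ _ hs, Nat.mod_eq_of_lt hi, Nat.div_eq_of_lt hi]
    · rintro ⟨h1, rfl⟩
      rw [← h1]
      exact (Nat.mod_add_div' t s).symm
  have hlt : t / s < y := (Nat.div_lt_iff_lt_mul hs).2 ht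
  simp only [hdecomp, mul_ite, mul_one, mul_zero, ite_and, antiperiodicSingle]
  split_ifs
  · simp [Finset.sum_ite_eq, hlt]
  · simp

variable (R) in
def negacyclicShift (r : ℕ) : Matrix (Fin r) (Fin r) R :=
  Matrix.of fun i j =>
    if (i : ℕ) + 1 = j then 1 else if (i : ℕ) = r - 1 ∧ (j : ℕ) = 0 then -1 else 0

section
variable {r : ℕ} [NeZero r]

def negacyclicExtend : (Fin r → R) →ₗ[R] ℕ → R where
  toFun w t := (-1) ^ (t / r) * w (Fin.ofNat r t)
  map_add' _ _ := by ext; simp [mul_add]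
  map_smul' _ _ := by ext; simp; ring

theorem negacyclicExtend_apply (w : Fin r → R) (t : ℕ) :
    negacyclicExtend w t = (-1) ^ (t / r) * w (Fin.ofNat r t) := rfl

@[simp]
theorem negacyclicExtend_val (w : Fin r → R) (j : Fin r) : negacyclicExtend w j = w j := by
  simp [negacyclicExtend_apply, Nat.div_eq_of_lt j.isLt]

theorem negacyclicExtend_antiperiodic (w : Fin r → R) : Antiperiodic (negacyclicExtend w) r := by
  intro t
  have hmod : Fin.ofNat r (t + r) = Fin.ofNat r t := Fin.ext (by simp)
  rw [negacyclicExtend_apply, negacyclicExtend_apply, Nat.add_div_right t (NeZero.pos r), pow_succ,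
    hmod, mul_neg_one, neg_mul]

theorem negacyclicExtend_restrict {f : ℕ → R} (hf : Antiperiodic f r) :
    negacyclicExtend (fun j : Fin r => f j) = f := by
  ext t
  conv_rhs => rw [← Nat.mod_add_div' t r, hf.add_mul_eq]
  rfl

theorem negacyclicShift_apply (i j : Fin r) : negacyclicShift R r i j =
    if j = Fin.ofNat r (i + 1) then (-1) ^ (((i : ℕ) + 1) / r) else 0 := by
  have hi := i.isLt
  have hj := j.isLt
  rcases Nat.lt_or_ge ((i : ℕ) + 1) r with h | h
  · rw [Nat.div_eq_of_lt h, pow_zero]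
    simp only [negacyclicShift, of_apply, Fin.ext_iff, Fin.val_ofNat, Nat.mod_eq_of_lt h]
    split_ifs <;> first | rfl | omega
  · have h' : (i : ℕ) + 1 = r := by omega
    rw [h', Nat.div_self (NeZero.pos r), pow_one]
    simp only [negacyclicShift, of_apply, Fin.ext_iff, Fin.val_ofNat, h', Nat.mod_self]
    split_ifs <;> first | rfl | omega

theorem negacyclicShift_mulVec_apply (w : Fin r → R) (j : Fin r) :
    (negacyclicShift R r *ᵥ w) j = negacyclicExtend w ((j : ℕ) + 1) := by
  simp [mulVec, dotProduct, negacyclicShift_apply, ite_mul, negacyclicExtend_apply]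

theorem negacyclicExtend_negacyclicShift_mulVec (w : Fin r → R) (t : ℕ) :
    negacyclicExtend (negacyclicShift R r *ᵥ w) t = negacyclicExtend w (t + 1) := by
  rw [negacyclicExtend_apply, negacyclicShift_mulVec_apply,
    ← (negacyclicExtend_antiperiodic w).add_mul_eq, Fin.val_ofNat]
  have := Nat.mod_add_div' t r
  exact congrArg _ (by omega)

theorem negacyclicExtend_negacyclicShift_pow_mulVec (k : ℕ) (w : Fin r → R) (t : ℕ) :
    negacyclicExtend (negacyclicShift R r ^ k *ᵥ w) t = negacyclicExtend w (t + k) := by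
  induction k generalizing t with
  | zero => simp
  | succ k ih =>
    rw [pow_succ', ← mulVec_mulVec, negacyclicExtend_negacyclicShift_mulVec, ih, add_assoc,
      add_comm 1]

theorem negacyclicShift_pow_mulVec_eq_neg_iff (k : ℕ) (w : Fin r → R) :
    negacyclicShift R r ^ k *ᵥ w = -w ↔ Antiperiodic (negacyclicExtend w) k := by
  constructor
  · intro h t
    rw [← negacyclicExtend_negacyclicShift_pow_mulVec, h, map_neg, Pi.neg_apply]
  · intro h
    ext j
    rw [← negacyclicExtend_val (negacyclicShift R r ^ k *ᵥ w) j,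
      negacyclicExtend_negacyclicShift_pow_mulVec, h, Pi.neg_apply, negacyclicExtend_val]

end

theorem stmt_17_general (n r x y s : ℕ) (hn : 2 ≤ n) (hx : n = x * s) (hy : r = y * s)
    (hxy : Nat.gcd x y = 1) (hxo : Odd x) (hyo : Odd y)
    (Sr : Matrix (Fin r) (Fin r) ℚ)
    (hSr : ∀ i j : Fin r, Sr i j =
      if (i : ℕ) + 1 = (j : ℕ) then 1
      else if (i : ℕ) = r - 1 ∧ (j : ℕ) = 0 then -1 else 0)
    (v : Fin s → (Fin r → ℚ))
    (hv : ∀ (i : Fin s) (t : Fin r), v i t =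
      ∑ ℓ ∈ Finset.range y, (-1 : ℚ) ^ ℓ * (if (t : ℕ) = (i : ℕ) + ℓ * s then 1 else 0)) :
    LinearIndependent ℚ v ∧
    (∀ i : Fin s, (Sr ^ n).mulVec (v i) = -(v i)) ∧
    (∀ w : Fin r → ℚ, (Sr ^ n).mulVec w = -w → w ∈ Submodule.span ℚ (Set.range v)) := by
  subst hx hy
  have hs : 0 < s := Nat.pos_of_ne_zero (by rintro rfl; omega)
  have : NeZero (y * s) := ⟨(Nat.mul_pos hyo.pos hs).ne'⟩
  obtain rfl : Sr = negacyclicShift ℚ (y * s) := Matrix.ext hSr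
  obtain rfl : v = fun (i : Fin s) (t : Fin (y * s)) => antiperiodicSingle s i t := by
    ext i t
    rw [hv, antiperiodicSingle_eq_sum_range i.isLt t.isLt]
  have hext (i : Fin s) :
      negacyclicExtend (fun t : Fin (y * s) => antiperiodicSingle (R := ℚ) s i t) =
        antiperiodicSingle s i :=
    negacyclicExtend_restrict ((antiperiodicSingle_antiperiodic hs i).odd_mul hyo)
  refine ⟨?_, fun i => ?_, fun w hw => ?_⟩
  · apply LinearIndependent.of_comp negacyclicExtend
    rw [show ⇑negacyclicExtend ∘ _ = _ from funext hext]
    exact linearIndependent_antiperiodicSingle s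
  · rw [negacyclicShift_pow_mulVec_eq_neg_iff, hext]
    exact (antiperiodicSingle_antiperiodic hs i).odd_mul hxo
  · rw [negacyclicShift_pow_mulVec_eq_neg_iff] at hw
    have hper : Antiperiodic (negacyclicExtend w) s :=
      Antiperiodic.of_coprime hxy hxo hyo hw (negacyclicExtend_antiperiodic w)
    rw [Submodule.mem_span_range_iff_exists_fun]
    refine ⟨fun i => negacyclicExtend w i, ?_⟩
    ext t
    simpa [Finset.sum_apply] using (congrFun (hper.eq_sum_antiperiodicSingle hs) t).symm

/-- with `s = gcd(n,r)`, `n = x·s`, `r = y·s`, `x, y` odd, the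
vectors `v_i = Σ_{ℓ=0}^{y-1} (-1)^ℓ e_{i+ℓs}` (`i = 1,…,s`; here 0-based:
`v i` has entry `(-1)^ℓ` at position `i + ℓ·s` for `i : Fin s`) form a basis
of the `-1` eigenspace of `S_rⁿ`. -/
theorem stmt_17 (n r x y s : ℕ) (hn : 2 ≤ n) (hnr : n ≤ r)
    (hs : s = Nat.gcd n r) (hx : n = x * s) (hy : r = y * s)
    (hxy : Nat.gcd x y = 1) (hxo : Odd x) (hyo : Odd y)
    (Sr : Matrix (Fin r) (Fin r) ℚ)
    (hSr : ∀ i j : Fin r, Sr i j =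
      if (i : ℕ) + 1 = (j : ℕ) then 1
      else if (i : ℕ) = r - 1 ∧ (j : ℕ) = 0 then -1 else 0)
    (v : Fin s → (Fin r → ℚ))
    (hv : ∀ (i : Fin s) (t : Fin r), v i t =
      ∑ ℓ ∈ Finset.range y, (-1 : ℚ) ^ ℓ * (if (t : ℕ) = (i : ℕ) + ℓ * s then 1 else 0)) :
    LinearIndependent ℚ v ∧
    (∀ i : Fin s, (Sr ^ n).mulVec (v i) = -(v i)) ∧
    (∀ w : Fin r → ℚ, (Sr ^ n).mulVec w = -w → w ∈ Submodule.span ℚ (Set.range v)) :=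
  stmt_17_general n r x y s hn hx hy hxy hxo hyo Sr hSr v hv
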